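/- Let G be a finite abelian group with |G| ≥ 3. If U is a minimal zero-sum sequence over G of length |U| = D(G), then the set of subsequence sums Σ(U) equals G. -/

import Mathlib

open Multiset

/-- A minimal zero-sum sequence over `G`: a nonempty zero-sum sequence with no
proper nonempty zero-sum subsequence. -/
def IsMinZeroSum {G : Type*} [AddCommGroup G] (S : Multiset G) : Prop :=
  S ≠ 0 ∧ S.sum = 0 ∧ ∀ T : Multiset G, T ≤ S → T ≠ 0 → T ≠ S → T.sum ≠ 0

/-- The Davenport constant of `G`: the maximal length of a minimal zero-sum
sequence over `G`. -/
noncomputable def DavenportConstant (G : Type*) [AddCommGroup G] : ℕ :=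
  sSup {n : ℕ | ∃ S : Multiset G, IsMinZeroSum S ∧ Multiset.card S = n}

/-- The set of lengths of a zero-sum sequence `A`: the set of all `k` such that
`A` can be written as a product of `k` minimal zero-sum sequences. -/
def LengthsSet {G : Type*} [AddCommGroup G] (A : Multiset G) : Set ℕ :=
  {k : ℕ | ∃ f : Multiset (Multiset G), Multiset.card f = k ∧
    (∀ S ∈ f, IsMinZeroSum S) ∧ f.sum = A}

/-- A factorization of a zero-sum sequence `A` into minimal zero-sum sequences. -/
def IsFactorization {G : Type*} [AddCommGroup G] (A : Multiset G)
    (z : Multiset (Multiset G)) : Prop :=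
  (∀ S ∈ z, IsMinZeroSum S) ∧ z.sum = A

/-- The distance between two factorizations. -/
def factDist {G : Type*} [AddCommGroup G] [DecidableEq G]
    (z z' : Multiset (Multiset G)) : ℕ :=
  max (Multiset.card (z - z')) (Multiset.card (z' - z))

/-- The catenary degree of the monoid of zero-sum sequences over `G`: the smallest
`N` such that any two factorizations of an element can be connected by a chain of
factorizations in which consecutive members have distance at most `N`. -/
noncomputable def CatenaryDegree (G : Type*) [AddCommGroup G] [DecidableEq G] : ℕ :=
  sInf {N : ℕ | ∀ (A : Multiset G) (z z' : Multiset (Multiset G)),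
    IsFactorization A z → IsFactorization A z' →
    Relation.ReflTransGen (fun x y => IsFactorization A y ∧ factDist x y ≤ N) z z'}

/-- The invariant `ℸ(G) = sup { min (L \ {2}) : 2 ∈ L ∈ 𝓛(G) }`. -/
noncomputable def Daleth (G : Type*) [AddCommGroup G] : ℕ :=
  sSup {m : ℕ | ∃ A : Multiset G, A.sum = 0 ∧ 2 ∈ LengthsSet A ∧
    (LengthsSet A \ {2}).Nonempty ∧ m = sInf (LengthsSet A \ {2})}

/-!
For `g ≠ 0`, replace one term of `U` by `-g`. The new sequence still has length `D(G)`, so it is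
not zero-sum free (a zero-sum free `S` extends by `-σ(S)` to a minimal zero-sum sequence, whence
`|S| < D(G)`). Its nonempty zero-sum subsequence must contain `-g`, since what is left of `U` is
zero-sum free; removing `-g` leaves a subsequence of `U` with sum `g`.
-/

theorem Multiset.le_or_exists_eq_cons_of_le_cons {α : Type*} {a : α} {s t : Multiset α}
    (h : t ≤ a ::ₘ s) : t ≤ s ∨ ∃ t' ≤ s, t = a ::ₘ t' := by
  classical
  by_cases ha : a ∈ t
  · exact Or.inr ⟨t.erase a, erase_le_iff_le_cons.mpr h, (cons_erase ha).symm⟩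
  · exact Or.inl ((le_cons_of_notMem ha).mp h)

def IsZeroSumFree {G : Type*} [AddCommGroup G] (S : Multiset G) : Prop :=
  ∀ T ≤ S, T ≠ 0 → T.sum ≠ 0

section

variable {G : Type*} [AddCommGroup G]

-- `DavenportConstant G = 0` is the junk value of `sSup` when the lengths are unbounded.
theorem IsMinZeroSum.card_le_davenportConstant (hD : DavenportConstant G ≠ 0) {U : Multiset G}
    (hU : IsMinZeroSum U) : card U ≤ DavenportConstant G :=
  le_csSup (not_not.mp fun h => hD (Nat.sSup_of_not_bddAbove h)) ⟨U, hU, rfl⟩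

theorem IsMinZeroSum.isZeroSumFree_erase [DecidableEq G] {U : Multiset G} (hU : IsMinZeroSum U)
    {u : G} (hu : u ∈ U) : IsZeroSumFree (U.erase u) := fun T hT hT0 =>
  hU.2.2 T (hT.trans (erase_le u U)) hT0 (hT.trans_lt (erase_lt.mpr hu)).ne

namespace IsZeroSumFree

variable {S : Multiset G}

theorem isMinZeroSum_cons_neg_sum (hS : IsZeroSumFree S) : IsMinZeroSum (-S.sum ::ₘ S) := by
  refine ⟨cons_ne_zero, by rw [sum_cons, neg_add_cancel], fun T hT hT0 hTS hTsum => ?_⟩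
  obtain hT | ⟨T', hT', rfl⟩ := le_or_exists_eq_cons_of_le_cons hT
  · exact hS T hT hT0 hTsum
  · obtain ⟨R, rfl⟩ := Multiset.le_iff_exists_add.mp hT'
    have hR0 : R ≠ 0 := by
      rintro rfl
      exact hTS (by rw [add_zero])
    have hRsum : R.sum = 0 := by
      rw [sum_cons, sum_add] at hTsum
      rw [← neg_eq_zero, ← hTsum]
      abel
    exact hS R (le_add_left le_rfl) hR0 hRsum

theorem card_lt_davenportConstant (hD : DavenportConstant G ≠ 0) (hS : IsZeroSumFree S) :
    card S < DavenportConstant G := by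
  simpa using hS.isMinZeroSum_cons_neg_sum.card_le_davenportConstant hD

theorem exists_le_sum_eq_neg_of_not_cons (hS : IsZeroSumFree S) {a : G}
    (h : ¬IsZeroSumFree (a ::ₘ S)) : ∃ T ≤ S, T.sum = -a := by
  simp only [IsZeroSumFree, not_forall, not_not] at h
  obtain ⟨T, hT, hT0, hTsum⟩ := h
  obtain hT | ⟨T', hT', rfl⟩ := le_or_exists_eq_cons_of_le_cons hT
  · exact absurd hTsum (hS T hT hT0)
  · exact ⟨T', hT', by rwa [sum_cons, add_eq_zero_iff_neg_eq, eq_comm] at hTsum⟩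

end IsZeroSumFree

end

theorem statement17_general {G : Type*} [AddCommGroup G]
    (U : Multiset G) (hU : IsMinZeroSum U)
    (hcard : Multiset.card U = DavenportConstant G) :
    {g : G | ∃ T ≤ U, T ≠ 0 ∧ T.sum = g} = Set.univ := by
  classical
  refine Set.eq_univ_of_forall fun g => ?_
  obtain rfl | hg := eq_or_ne g 0
  · exact ⟨U, le_rfl, hU.1, hU.2.1⟩
  obtain ⟨u, hu⟩ := exists_mem_of_ne_zero hU.1
  have hD : DavenportConstant G ≠ 0 := hcard ▸ card_pos.mpr hU.1 |>.ne'
  have hnot : ¬IsZeroSumFree (-g ::ₘ U.erase u) := fun h => by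
    have := h.card_lt_davenportConstant hD
    rw [card_cons, card_erase_add_one hu, hcard] at this
    exact lt_irrefl _ this
  obtain ⟨T, hT, hTsum⟩ := (hU.isZeroSumFree_erase hu).exists_le_sum_eq_neg_of_not_cons hnot
  rw [neg_neg] at hTsum
  exact ⟨T, hT.trans (erase_le u U), fun h => hg (by rw [← hTsum, h, sum_zero]), hTsum⟩

theorem statement17 {G : Type*} [AddCommGroup G] [Fintype G]
    (hG : 3 ≤ Fintype.card G)
    (U : Multiset G) (hU : IsMinZeroSum U)
    (hcard : Multiset.card U = DavenportConstant G) :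
    {g : G | ∃ T ≤ U, T ≠ 0 ∧ T.sum = g} = Set.univ :=
  statement17_general U hU hcard
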